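/- For each n ∈ ℤ let Ω(n) = {η ∈ ℝ : ∃ n₁ ∈ ℤ, |η + 3 n n₁ (n - n₁)| ≤ C ⟨n n₁ (n-n₁)⟩^{1/100}}. Then for any β > 2/3 + 1/100, sup_{n} ∫_ℝ ⟨τ - n³⟩^{-β} χ_{Ω(n)}(τ - n³) dτ ≤ C' < ∞. -/

import Mathlib

/-! After the translation `τ ↦ τ - n³`, `Ω(n)` is the union over `n₁` of windows of radius
`r = C ⟨m⟩^{1/100}` centred at distance `3m` from the origin, where `m = |n n₁ (n - n₁)|`.
Once `r ≤ m` the weight is `≤ ⟨m⟩^{-β}` on the window, so each window contributes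
`≲ m^{-(β - 1/100)}`; for `r > m` the product `m` is bounded. Since
`m ≥ min (|n₁|, |n - n₁|)^{3/2}`, the contribution is at most `|n₁|^{-t} + |n - n₁|^{-t}` with
`t = 3(β - 1/100)/2 > 1`, which is summable over `n₁` uniformly in `n`. For `n = 0` every window
is `[-C, C]`. -/

open MeasureTheory Metric
open scoped ENNReal

theorem lintegral_ofReal_indicator_comp_sub_le {G : Type*} [MeasurableSpace G] [AddGroup G]
    [MeasurableAdd G] {μ : Measure G} [μ.IsAddRightInvariant] (s : Set G) (f : G → ℝ) (x : G) :
    ∫⁻ τ, ENNReal.ofReal (s.indicator f (τ - x)) ∂μ ≤ ∫⁻ η in s, ENNReal.ofReal (f η) ∂μ := by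
  rw [lintegral_sub_right_eq_self (fun η => ENNReal.ofReal (s.indicator f η)) x]
  exact (lintegral_mono fun η =>
    (congr_fun (Set.indicator_comp_of_zero ENNReal.ofReal_zero) η).ge).trans
      (lintegral_indicator_le _ _)

theorem setLIntegral_closedBall_one_add_abs_rpow_neg_le (a r : ℝ) {β : ℝ} (hβ : 0 ≤ β) :
    ∫⁻ η in closedBall a r, ENNReal.ofReal ((1 + |η|) ^ (-β)) ≤
      ENNReal.ofReal (2 * r * (1 + max 0 (|a| - r)) ^ (-β)) := by
  have hbound : ∀ η ∈ closedBall a r, ENNReal.ofReal ((1 + |η|) ^ (-β)) ≤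
      ENNReal.ofReal ((1 + max 0 (|a| - r)) ^ (-β)) := by
    intro η hη
    rw [mem_closedBall, Real.dist_eq] at hη
    have hfar : max 0 (|a| - r) ≤ |η| :=
      max_le (abs_nonneg η) (by linarith [abs_sub_abs_le_abs_sub a η, abs_sub_comm η a])
    exact ENNReal.ofReal_le_ofReal
      (Real.rpow_le_rpow_of_nonpos (by positivity) (by linarith) (neg_nonpos.2 hβ))
  calc _ ≤ ∫⁻ _ in closedBall a r, ENNReal.ofReal ((1 + max 0 (|a| - r)) ^ (-β)) :=
        setLIntegral_mono measurable_const hbound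
    _ = _ := by
      rw [setLIntegral_const, Real.volume_closedBall, ← ENNReal.ofReal_mul (by positivity),
        mul_comm]

/-- Either the window is short compared with its distance `3m` from the origin, or `m` is
bounded in terms of `C`. -/
theorem window_length_mul_weight_le {C β γ m : ℝ} (hC : 0 ≤ C) (hβ : 0 ≤ β) (hγ₀ : 0 ≤ γ)
    (hγ₁ : γ < 1) (hm : 0 ≤ m) :
    2 * (C * (1 + m) ^ γ) * (1 + max 0 (3 * m - C * (1 + m) ^ γ)) ^ (-β) ≤
      2 * C * (1 + C) ^ (β / (1 - γ)) * (1 + m) ^ (-(β - γ)) := by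
  set u := 1 + m
  have hu0 : 0 < u := by linarith
  have hu1 : 1 ≤ u ^ γ := Real.one_le_rpow (by linarith) hγ₀
  have hK : 1 ≤ (1 + C) ^ (β / (1 - γ)) :=
    Real.one_le_rpow (by linarith) (div_nonneg hβ (by linarith))
  have hdecay : 0 ≤ u ^ (-(β - γ)) := by positivity
  rcases le_or_gt (C * u ^ γ) m with hshort | hlong
  · have hfar : (1 + max 0 (3 * m - C * u ^ γ)) ^ (-β) ≤ u ^ (-β) :=
      Real.rpow_le_rpow_of_nonpos hu0 (by linarith [le_max_right 0 (3 * m - C * u ^ γ)])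
        (neg_nonpos.2 hβ)
    calc _ ≤ 2 * (C * u ^ γ) * u ^ (-β) := by gcongr
      _ = 2 * C * u ^ (-(β - γ)) := by
        rw [mul_assoc, mul_assoc, ← Real.rpow_add hu0, show γ + -β = -(β - γ) by ring, mul_assoc]
      _ ≤ _ := mul_le_mul_of_nonneg_right (le_mul_of_one_le_right (by positivity) hK) hdecay
  · have hbounded : u ^ β ≤ (1 + C) ^ (β / (1 - γ)) := by
      have hsplit : u = u ^ (1 - γ) * u ^ γ := by
        rw [← Real.rpow_add hu0, sub_add_cancel, Real.rpow_one]
      have hsmall : u ^ (1 - γ) ≤ 1 + C := by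
        have : u ^ (1 - γ) * u ^ γ ≤ (1 + C) * u ^ γ := by rw [← hsplit]; nlinarith
        exact le_of_mul_le_mul_right this (by positivity)
      calc u ^ β = (u ^ (1 - γ)) ^ (β / (1 - γ)) := by
            rw [← Real.rpow_mul hu0.le, mul_div_cancel₀ _ (by linarith)]
        _ ≤ _ := by gcongr
    have hnear : (1 + max 0 (3 * m - C * u ^ γ)) ^ (-β) ≤ 1 :=
      Real.rpow_le_one_of_one_le_of_nonpos (by linarith [le_max_left 0 (3 * m - C * u ^ γ)])
        (neg_nonpos.2 hβ)
    calc _ ≤ 2 * (C * u ^ γ) * 1 := by gcongr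
      _ = 2 * C * u ^ β * u ^ (-(β - γ)) := by
        rw [mul_assoc _ (u ^ β), ← Real.rpow_add hu0, show β + -(β - γ) = γ by ring]; ring
      _ ≤ _ := by gcongr

theorem mul_mul_rpow_neg_le {N a b s : ℝ} (hN : 1 ≤ N) (ha : 1 ≤ a) (hb : 1 ≤ b) (hs : 0 ≤ s) :
    (N * a * b) ^ (-s) ≤ a ^ (-(3 * s / 2)) + b ^ (-(3 * s / 2)) := by
  wlog hab : a ≤ b generalizing a b
  · rw [mul_right_comm, add_comm]
    exact this hb ha (le_of_not_ge hab)
  have ha0 : 0 < a := by linarith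
  have hroot : a ^ (1 / 2 : ℝ) ≤ b :=
    (Real.rpow_le_rpow_of_exponent_le ha (by norm_num : (1 / 2 : ℝ) ≤ 1)).trans
      ((Real.rpow_one a).le.trans hab)
  have hpow : a ^ (3 / 2 : ℝ) ≤ N * a * b := by
    rw [show (3 / 2 : ℝ) = 1 + 1 / 2 by norm_num, Real.rpow_add ha0, Real.rpow_one]
    nlinarith [mul_le_mul_of_nonneg_left hroot ha0.le,
      mul_le_mul_of_nonneg_right hN (by positivity : 0 ≤ a * b)]
  calc (N * a * b) ^ (-s) ≤ (a ^ (3 / 2 : ℝ)) ^ (-s) :=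
        Real.rpow_le_rpow_of_nonpos (by positivity) hpow (neg_nonpos.2 hs)
    _ = a ^ (-(3 * s / 2)) := by rw [← Real.rpow_mul ha0.le]; ring_nf
    _ ≤ _ := le_add_of_nonneg_right (by positivity)

def resonantWindow (C : ℝ) (n n₁ : ℤ) : Set ℝ :=
  {η : ℝ | n₁ ≠ 0 ∧ n - n₁ ≠ 0 ∧
    |η + 3 * (n : ℝ) * (n₁ : ℝ) * ((n : ℝ) - (n₁ : ℝ))| ≤
      C * (1 + |((n * n₁ * (n - n₁) : ℤ) : ℝ)|) ^ ((1 : ℝ) / 100)}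

theorem resonantWindow_zero_subset (C : ℝ) (n₁ : ℤ) :
    resonantWindow C 0 n₁ ⊆ closedBall 0 C := fun η hη => by
  simpa [resonantWindow, Real.dist_eq] using hη.2.2

theorem setLIntegral_resonantWindow_le {C β : ℝ} (hC : 0 ≤ C) (hβ : 1 / 100 ≤ β) {n : ℤ}
    (hn : n ≠ 0) (n₁ : ℤ) :
    ∫⁻ η in resonantWindow C n n₁, ENNReal.ofReal ((1 + |η|) ^ (-β)) ≤
      ENNReal.ofReal (2 * C * (1 + C) ^ (β / (1 - 1 / 100))) *
        (ENNReal.ofReal (|(n₁ : ℝ)| ^ (-(3 * (β - 1 / 100) / 2))) +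
          ENNReal.ofReal (|((n - n₁ : ℤ) : ℝ)| ^ (-(3 * (β - 1 / 100) / 2)))) := by
  by_cases hvalid : n₁ ≠ 0 ∧ n - n₁ ≠ 0
  swap
  · have hempty : resonantWindow C n n₁ = ∅ :=
      Set.eq_empty_of_forall_notMem fun η hη => hvalid ⟨hη.1, hη.2.1⟩
    simp [hempty]
  obtain ⟨hn₁, hn₂⟩ := hvalid
  have one_le_abs : ∀ {k : ℤ}, k ≠ 0 → (1 : ℝ) ≤ |(k : ℝ)| := fun hk => by
    exact_mod_cast Int.one_le_abs hk
  set m : ℝ := |((n * n₁ * (n - n₁) : ℤ) : ℝ)| with hm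
  have hm1 : 1 ≤ m := one_le_abs (mul_ne_zero (mul_ne_zero hn hn₁) hn₂)
  set K := 2 * C * (1 + C) ^ (β / (1 - 1 / 100))
  have hsub : resonantWindow C n n₁ ⊆
      closedBall (-(3 * (n : ℝ) * n₁ * (n - n₁))) (C * (1 + m) ^ (1 / 100 : ℝ)) :=
    fun η hη => by rw [mem_closedBall, Real.dist_eq, sub_neg_eq_add]; exact hη.2.2
  have hcentre : |-(3 * (n : ℝ) * n₁ * (n - n₁))| = 3 * m := by
    rw [hm, abs_neg]; push_cast; rw [mul_assoc 3, mul_assoc 3, abs_mul, abs_of_pos three_pos]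
  have hproduct : m ^ (-(β - 1 / 100)) ≤ |(n₁ : ℝ)| ^ (-(3 * (β - 1 / 100) / 2)) +
      |((n - n₁ : ℤ) : ℝ)| ^ (-(3 * (β - 1 / 100) / 2)) := by
    rw [hm, Int.cast_mul, Int.cast_mul, abs_mul, abs_mul]
    exact mul_mul_rpow_neg_le (one_le_abs hn) (one_le_abs hn₁) (one_le_abs hn₂) (by linarith)
  calc _ ≤ _ := lintegral_mono_set hsub
    _ ≤ _ := setLIntegral_closedBall_one_add_abs_rpow_neg_le _ _ (by linarith)
    _ ≤ ENNReal.ofReal (K * (1 + m) ^ (-(β - 1 / 100))) := by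
      rw [hcentre]
      exact ENNReal.ofReal_le_ofReal
        (window_length_mul_weight_le hC (by linarith) (by norm_num) (by norm_num) (by linarith))
    _ ≤ ENNReal.ofReal (K * m ^ (-(β - 1 / 100))) := by
      refine ENNReal.ofReal_le_ofReal (mul_le_mul_of_nonneg_left ?_ (by positivity))
      exact Real.rpow_le_rpow_of_nonpos (by linarith) (by linarith) (by linarith)
    _ ≤ ENNReal.ofReal (K * (|(n₁ : ℝ)| ^ (-(3 * (β - 1 / 100) / 2)) +
        |((n - n₁ : ℤ) : ℝ)| ^ (-(3 * (β - 1 / 100) / 2)))) := by gcongr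
    _ = _ := by
      rw [ENNReal.ofReal_mul (by positivity), ENNReal.ofReal_add (by positivity) (by positivity)]

theorem setLIntegral_iUnion_resonantWindow_le {C β : ℝ} (hC : 0 ≤ C) (hβ : 1 / 100 ≤ β) {n : ℤ}
    (hn : n ≠ 0) :
    ∫⁻ η in ⋃ n₁, resonantWindow C n n₁, ENNReal.ofReal ((1 + |η|) ^ (-β)) ≤
      ENNReal.ofReal (2 * C * (1 + C) ^ (β / (1 - 1 / 100))) *
        (2 * ∑' j : ℤ, ENNReal.ofReal (|(j : ℝ)| ^ (-(3 * (β - 1 / 100) / 2)))) := by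
  calc _ ≤ ∑' n₁, ∫⁻ η in resonantWindow C n n₁, ENNReal.ofReal ((1 + |η|) ^ (-β)) :=
        lintegral_iUnion_le _ _
    _ ≤ _ := ENNReal.tsum_le_tsum (setLIntegral_resonantWindow_le hC hβ hn)
    _ = _ := by
      have hshift :
          ∑' n₁ : ℤ, ENNReal.ofReal (|((n - n₁ : ℤ) : ℝ)| ^ (-(3 * (β - 1 / 100) / 2))) =
            ∑' j : ℤ, ENNReal.ofReal (|(j : ℝ)| ^ (-(3 * (β - 1 / 100) / 2))) :=
        (Equiv.subLeft n).tsum_eq fun j : ℤ =>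
          ENNReal.ofReal (|(j : ℝ)| ^ (-(3 * (β - 1 / 100) / 2)))
      rw [ENNReal.tsum_mul_left, ENNReal.tsum_add, hshift, ← two_mul]

theorem stmt14 (C : ℝ) (hC : 0 < C) (β : ℝ) (hβ : 2 / 3 + 1 / 100 < β) :
    ∃ C' : ℝ≥0∞, C' ≠ ⊤ ∧ ∀ n : ℤ,
      (∫⁻ τ : ℝ, ENNReal.ofReal (Set.indicator
          {η : ℝ | ∃ n₁ : ℤ, n₁ ≠ 0 ∧ n - n₁ ≠ 0 ∧
            |η + 3 * (n : ℝ) * (n₁ : ℝ) * ((n : ℝ) - (n₁ : ℝ))| ≤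
              C * (1 + |((n * n₁ * (n - n₁) : ℤ) : ℝ)|) ^ ((1 : ℝ) / 100)}
          (fun η => (1 + |η|) ^ (-β)) (τ - (n : ℝ) ^ 3))) ≤ C' := by
  have hsum : ∑' j : ℤ, ENNReal.ofReal (|(j : ℝ)| ^ (-(3 * (β - 1 / 100) / 2))) ≠ ⊤ := by
    rw [← ENNReal.ofReal_tsum_of_nonneg (fun j => by positivity)
      (Real.summable_abs_int_rpow (by linarith))]
    exact ENNReal.ofReal_ne_top
  refine ⟨ENNReal.ofReal (2 * C) + ENNReal.ofReal (2 * C * (1 + C) ^ (β / (1 - 1 / 100))) *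
    (2 * ∑' j : ℤ, ENNReal.ofReal (|(j : ℝ)| ^ (-(3 * (β - 1 / 100) / 2)))), by finiteness,
    fun n => ?_⟩
  refine (lintegral_ofReal_indicator_comp_sub_le _ _ _).trans ?_
  rw [Set.ofPred_exists]
  rcases eq_or_ne n 0 with rfl | hn
  · calc _ ≤ ∫⁻ η in closedBall 0 C, ENNReal.ofReal ((1 + |η|) ^ (-β)) :=
          lintegral_mono_set (Set.iUnion_subset (resonantWindow_zero_subset C))
      _ ≤ ENNReal.ofReal (2 * C) :=
          (setLIntegral_closedBall_one_add_abs_rpow_neg_le 0 C (by linarith)).trans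
            (by simp [hC.le])
      _ ≤ _ := le_self_add
  · exact (setLIntegral_iUnion_resonantWindow_le hC.le (by linarith) hn).trans le_add_self
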